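/- arXiv:1206.3967 — 2 statements merged into one kernel-verified Lean document; each statement's English description precedes it below -/
import Mathlib

section
/- For every s ∈ ℝ, the function g_s has a left derivative at s equal to s·g_s(s) + 1 − Φ(s) and a right derivative at s equal to s·g_s(s) − Φ(s); consequently the right-sided derivative g_s'(s+) equals the left-sided derivative g_s'(s−) minus 1, i.e. g_s'(s+) = −1 + g_s'(s−). -/
open MeasureTheory

noncomputable def Phi (s : ℝ) : ℝ :=
  ((ProbabilityTheory.gaussianReal 0 1) (Set.Iic s)).toReal

noncomputable def steinG (s w : ℝ) : ℝ :=
  Real.exp (w ^ 2 / 2) *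
    ∫ u in Set.Iic w, ((if u ≤ s then (1 : ℝ) else 0) - Phi s) * Real.exp (-u ^ 2 / 2)

/-!
Write `g_s(w) = e^{w²/2} H(w)` with `H(w) = ∫_{-∞}^w h`. The integrand `h` is continuous on
each side of `s`, with one-sided limits `(1 - Φ(s)) e^{-s²/2}` and `-Φ(s) e^{-s²/2}` at `s`,
so the one-sided fundamental theorem of calculus gives the one-sided derivatives of `H`, and the
product rule those of `g_s`; the factor `e^{w²/2}` cancels `e^{-s²/2}`.
-/

open Filter Topology Set

theorem hasDerivWithinAt_integral_Iic {E : Type*} [NormedAddCommGroup E] [NormedSpace ℝ E]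
    [CompleteSpace E] {f : ℝ → E} {b : ℝ} {c : E} {s t : Set ℝ}
    [intervalIntegral.FTCFilter b (𝓝[s] b) (𝓝[t] b)] (hf : Integrable f)
    (hb : Tendsto f (𝓝[t] b ⊓ ae volume) (𝓝 c)) :
    HasDerivWithinAt (fun w => ∫ u in Iic w, f u) c s b := by
  have hsplit :
      (fun w => ∫ u in Iic w, f u) = fun w => (∫ u in Iic b, f u) + ∫ u in b..w, f u := by
    funext w
    rw [← intervalIntegral.integral_Iic_sub_Iic hf.integrableOn hf.integrableOn, add_sub_cancel]
  rw [hsplit]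
  exact (intervalIntegral.integral_hasDerivWithinAt_of_tendsto_ae_right
    hf.intervalIntegrable hf.aestronglyMeasurable.stronglyMeasurableAtFilter hb).const_add _

theorem integrable_exp_neg_sq_div_two : Integrable fun u : ℝ => Real.exp (-u ^ 2 / 2) := by
  simpa [neg_div, div_eq_inv_mul] using integrable_exp_neg_mul_sq (b := 1 / 2) (by norm_num)

theorem integrable_steinIntegrand (s : ℝ) :
    Integrable fun u : ℝ =>
      ((if u ≤ s then (1 : ℝ) else 0) - Phi s) * Real.exp (-u ^ 2 / 2) := by
  refine integrable_exp_neg_sq_div_two.bdd_mul (c := 1 + |Phi s|) ?_ ?_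
  · exact ((measurable_const.ite measurableSet_Iic measurable_const).sub_const _)
      |>.aestronglyMeasurable
  · refine Eventually.of_forall fun u => (norm_sub_le _ _).trans ?_
    split_ifs <;> simp

theorem hasDerivWithinAt_steinG (s : ℝ) {t t' : Set ℝ}
    [intervalIntegral.FTCFilter s (𝓝[t] s) (𝓝[t'] s)] (c : ℝ)
    (hc : ∀ u ∈ t', (if u ≤ s then (1 : ℝ) else 0) = c) :
    HasDerivWithinAt (steinG s) (s * steinG s s + c - Phi s) t s := by
  have hlim :
      Tendsto (fun u => ((if u ≤ s then (1 : ℝ) else 0) - Phi s) * Real.exp (-u ^ 2 / 2))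
      (𝓝[t'] s) (𝓝 ((c - Phi s) * Real.exp (-s ^ 2 / 2))) := by
    refine Tendsto.congr' (eventually_nhdsWithin_of_forall fun u hu => ?_)
      (((by fun_prop : Continuous fun u : ℝ => (c - Phi s) * Real.exp (-u ^ 2 / 2)).tendsto
        s).mono_left nhdsWithin_le_nhds)
    simp only [hc u hu]
  have hH := hasDerivWithinAt_integral_Iic (s := t) (integrable_steinIntegrand s)
    (hlim.mono_left inf_le_left)
  have hE : HasDerivAt (fun w : ℝ => Real.exp (w ^ 2 / 2)) (s * Real.exp (s ^ 2 / 2)) s := by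
    simpa [mul_comm] using ((hasDerivAt_pow 2 s).div_const 2).exp
  refine (hE.hasDerivWithinAt.mul hH).congr_deriv ?_
  have hcancel : Real.exp (s ^ 2 / 2) * Real.exp (-s ^ 2 / 2) = 1 := by
    rw [← Real.exp_add]; ring_nf; exact Real.exp_zero
  rw [steinG]
  linear_combination (c - Phi s) * hcancel

/-- The Stein solution `g_s` has left derivative `s * g_s s + 1 - Φ s` and right
derivative `s * g_s s - Φ s` at `s`; consequently `g_s'(s+) = -1 + g_s'(s-)`. -/
theorem steinG_one_sided_derivs (s : ℝ) :
    HasDerivWithinAt (steinG s) (s * steinG s s + 1 - Phi s) (Set.Iic s) s ∧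
    HasDerivWithinAt (steinG s) (s * steinG s s - Phi s) (Set.Ici s) s ∧
    s * steinG s s - Phi s = -1 + (s * steinG s s + 1 - Phi s) := by
  refine ⟨hasDerivWithinAt_steinG s 1 fun u hu => if_pos hu, ?_, by ring⟩
  simpa using hasDerivWithinAt_steinG (t := Ici s) s 0 fun u hu => if_neg (not_le.mpr hu)
end

section
/- For every s ∈ ℝ and every w ∈ ℝ, |w·g_s(w) + 𝟙(w ≤ s) − Φ(s)| ≤ 1; that is, the derivative of g_s (including both one-sided derivatives at s) is bounded in absolute value by 1. -/
open MeasureTheory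

/-! The Stein solution has the closed form `g_s(w) = (Φ(w ∧ s) - Φ(w) Φ(s)) / φ(w)`, with `φ` the
standard normal density. Multiplying the derivative expression by `φ(w)` gives
`(1 - Φ(s)) (φ(w) + w Φ(w))` for `w ≤ s`, and the same expression at `(-s, -w)`, negated, for
`s < w`. Both are bounded by `φ(w)` using only `Φ(w) ≤ Φ(s)` and the two Mills-ratio
inequalities `w (1 - Φ(w)) ≤ φ(w)` and `-w Φ(w) ≤ φ(w)`; the first holds because
`∫_w^∞ u φ(u) du = φ(w)`, the second is its reflection. -/

open ProbabilityTheory Real Set Filter Topology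

lemma gaussianPDFReal_zero_one (u : ℝ) :
    gaussianPDFReal 0 1 u = (√(2 * π))⁻¹ * rexp (-u ^ 2 / 2) := by
  simp [gaussianPDFReal]

lemma gaussianPDFReal_zero_one_neg (u : ℝ) :
    gaussianPDFReal 0 1 (-u) = gaussianPDFReal 0 1 u := by
  simp only [gaussianPDFReal_zero_one, neg_sq]

lemma exp_neg_sq_div_two_eq_mul_gaussianPDFReal (u : ℝ) :
    rexp (-u ^ 2 / 2) = √(2 * π) * gaussianPDFReal 0 1 u := by
  rw [gaussianPDFReal_zero_one, mul_inv_cancel_left₀ (by positivity)]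

lemma hasDerivAt_gaussianPDFReal_zero_one (u : ℝ) :
    HasDerivAt (gaussianPDFReal 0 1) (-u * gaussianPDFReal 0 1 u) u := by
  have h : HasDerivAt (fun x : ℝ => -x ^ 2 / 2) (-u) u :=
    ((hasDerivAt_pow 2 u).fun_neg.div_const 2).congr_deriv (by ring)
  rw [funext gaussianPDFReal_zero_one]
  exact (h.exp.const_mul _).congr_deriv (by ring)

lemma tendsto_gaussianPDFReal_zero_one_atTop :
    Tendsto (gaussianPDFReal 0 1) atTop (𝓝 0) := by
  have h : Tendsto (fun x : ℝ => -x ^ 2 / 2) atTop atBot :=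
    (tendsto_neg_atTop_atBot.comp (tendsto_pow_atTop two_ne_zero)).atBot_div_const two_pos
  rw [funext gaussianPDFReal_zero_one]
  simpa using (tendsto_exp_atBot.comp h).const_mul (√(2 * π))⁻¹

lemma integrable_mul_gaussianPDFReal_zero_one :
    Integrable (fun u => u * gaussianPDFReal 0 1 u) := by
  simp_rw [gaussianPDFReal_zero_one, mul_left_comm _ (√(2 * π))⁻¹]
  refine Integrable.const_mul ?_ _
  simpa [div_eq_inv_mul, neg_div, mul_comm] using
    integrable_mul_exp_neg_mul_sq (b := (1 / 2 : ℝ)) (by norm_num)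

lemma integral_Ioi_mul_gaussianPDFReal_zero_one (a : ℝ) :
    ∫ u in Ioi a, u * gaussianPDFReal 0 1 u = gaussianPDFReal 0 1 a := by
  have := integral_Ioi_of_hasDerivAt_of_tendsto' (a := a) (f := fun u => -gaussianPDFReal 0 1 u)
    (fun u _ => by simpa using (hasDerivAt_gaussianPDFReal_zero_one u).fun_neg)
    integrable_mul_gaussianPDFReal_zero_one.integrableOn
    (by simpa using tendsto_gaussianPDFReal_zero_one_atTop.neg)
  simpa using this

lemma Phi_eq_integral (w : ℝ) : Phi w = ∫ u in Iic w, gaussianPDFReal 0 1 u := by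
  rw [Phi, gaussianReal_apply_eq_integral 0 one_ne_zero, ENNReal.toReal_ofReal
    (setIntegral_nonneg measurableSet_Iic fun _ _ => gaussianPDFReal_nonneg _ _ _)]

lemma one_sub_Phi_eq_integral (w : ℝ) : 1 - Phi w = ∫ u in Ioi w, gaussianPDFReal 0 1 u := by
  rw [← integral_gaussianPDFReal_eq_one 0 one_ne_zero, Phi_eq_integral,
    ← intervalIntegral.integral_Iic_add_Ioi (integrable_gaussianPDFReal 0 1).integrableOn
      (integrable_gaussianPDFReal 0 1).integrableOn, add_sub_cancel_left]

lemma Phi_neg (w : ℝ) : Phi (-w) = 1 - Phi w := by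
  rw [Phi_eq_integral, one_sub_Phi_eq_integral, ← integral_comp_neg_Ioi]
  simp only [gaussianPDFReal_zero_one_neg]

lemma Phi_nonneg (w : ℝ) : 0 ≤ Phi w := ENNReal.toReal_nonneg

lemma Phi_le_one (w : ℝ) : Phi w ≤ 1 := by
  have := one_sub_Phi_eq_integral w ▸
    setIntegral_nonneg measurableSet_Ioi fun u _ => gaussianPDFReal_nonneg 0 1 u
  linarith

lemma Phi_mono : Monotone Phi := fun _ _ h => measureReal_mono (Iic_subset_Iic.mpr h)

lemma mul_one_sub_Phi_le (w : ℝ) : w * (1 - Phi w) ≤ gaussianPDFReal 0 1 w := by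
  rw [one_sub_Phi_eq_integral, ← integral_const_mul, ← integral_Ioi_mul_gaussianPDFReal_zero_one]
  exact setIntegral_mono_on ((integrable_gaussianPDFReal 0 1).const_mul w).integrableOn
    integrable_mul_gaussianPDFReal_zero_one.integrableOn measurableSet_Ioi
    fun u hu => mul_le_mul_of_nonneg_right (le_of_lt hu) (gaussianPDFReal_nonneg 0 1 u)

lemma neg_mul_Phi_le (w : ℝ) : -w * Phi w ≤ gaussianPDFReal 0 1 w := by
  simpa [Phi_neg, gaussianPDFReal_zero_one_neg] using mul_one_sub_Phi_le (-w)

lemma steinG_eq (s w : ℝ) :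
    steinG s w = (Phi (min w s) - Phi w * Phi s) / gaussianPDFReal 0 1 w := by
  have hpdf := integrable_gaussianPDFReal 0 1
  have hintegrand : (fun u => ((if u ≤ s then (1 : ℝ) else 0) - Phi s) * rexp (-u ^ 2 / 2)) =
      fun u => √(2 * π) *
        ((Iic s).indicator (gaussianPDFReal 0 1) u - Phi s * gaussianPDFReal 0 1 u) := by
    ext u
    simp only [exp_neg_sq_div_two_eq_mul_gaussianPDFReal, indicator_apply, mem_Iic]
    split_ifs <;> ring
  have hint : ∫ u in Iic w, ((if u ≤ s then (1 : ℝ) else 0) - Phi s) * rexp (-u ^ 2 / 2) =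
      √(2 * π) * (Phi (min w s) - Phi w * Phi s) := by
    rw [hintegrand, integral_const_mul, integral_sub
      (hpdf.indicator measurableSet_Iic).integrableOn (hpdf.const_mul _).integrableOn,
      integral_indicator measurableSet_Iic, Measure.restrict_restrict measurableSet_Iic,
      Iic_inter_Iic, integral_const_mul, ← Phi_eq_integral, ← Phi_eq_integral, inf_comm,
      mul_comm (Phi s)]
  have hexp : rexp (w ^ 2 / 2) * rexp (-w ^ 2 / 2) = 1 := by
    rw [← exp_add]; ring_nf; exact exp_zero
  have hsqrt : √(2 * π) * (√(2 * π))⁻¹ = 1 := mul_inv_cancel₀ (by positivity)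
  rw [steinG, hint, eq_div_iff (gaussianPDFReal_pos 0 1 w one_ne_zero).ne',
    gaussianPDFReal_zero_one]
  linear_combination (Phi (min w s) - Phi w * Phi s) * (√(2 * π) * (√(2 * π))⁻¹ * hexp + hsqrt)

lemma abs_one_sub_mul_add_le {φ x c w : ℝ} (hx : 0 ≤ x) (hxc : x ≤ c) (hc : c ≤ 1)
    (hlow : -w * x ≤ φ) (hup : w * (1 - x) ≤ φ) : |(1 - c) * (φ + w * x)| ≤ φ := by
  rw [abs_le]
  constructor <;> nlinarith

lemma abs_one_sub_Phi_mul_add_le {s w : ℝ} (h : w ≤ s) :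
    |(1 - Phi s) * (gaussianPDFReal 0 1 w + w * Phi w)| ≤ gaussianPDFReal 0 1 w :=
  abs_one_sub_mul_add_le (Phi_nonneg w) (Phi_mono h) (Phi_le_one s) (neg_mul_Phi_le w)
    (mul_one_sub_Phi_le w)

/-- The derivative of the Stein solution (including both one-sided derivatives at `s`)
is bounded in absolute value by `1`. -/
theorem abs_steinG_deriv_le_one (s w : ℝ) :
    |w * steinG s w + (if w ≤ s then (1 : ℝ) else 0) - Phi s| ≤ 1 := by
  have hφ : 0 < gaussianPDFReal 0 1 w := gaussianPDFReal_pos 0 1 w one_ne_zero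
  suffices h : |(w * steinG s w + (if w ≤ s then (1 : ℝ) else 0) - Phi s) *
      gaussianPDFReal 0 1 w| ≤ gaussianPDFReal 0 1 w by
    rw [abs_mul, abs_of_pos hφ] at h
    exact le_of_mul_le_mul_right (by linarith) hφ
  rw [steinG_eq]
  rcases le_or_gt w s with hws | hsw
  · convert abs_one_sub_Phi_mul_add_le hws using 2
    rw [if_pos hws, min_eq_left hws]
    field_simp
    ring
  · convert abs_one_sub_Phi_mul_add_le (neg_le_neg hsw.le) using 1
    · rw [← abs_neg, if_neg hsw.not_ge, min_eq_right hsw.le, Phi_neg, Phi_neg,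
        gaussianPDFReal_zero_one_neg]
      congr 1
      field_simp
      ring
    · exact (gaussianPDFReal_zero_one_neg w).symm
end
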